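/- Let X be a d-mode tensor in ℝ^{I₁×⋯×I_d}, let ε > 0, and let ε₁,…,ε_d ≥ 0 satisfy Σ_{j=1}^d ε_j² = ε². Suppose for each j = 1,…,d the matrix A_j ∈ ℝ^{I_j×k_j} has orthonormal columns and satisfies ‖X ×_j (I − A_jA_jᵀ)‖_F ≤ ε_j ‖X‖_F. Then the approximation X̂ = G ×₁ A₁ ⋯ ×_d A_d with core G = X ×₁ A₁ᵀ ⋯ ×_d A_dᵀ satisfies ‖X − X̂‖_F ≤ ε ‖X‖_F. In particular this holds with ε_j = ε/√d for all j. -/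
import Mathlib


open MeasureTheory ProbabilityTheory BigOperators Matrix

noncomputable section

/-- A `d`-mode tensor with dimensions `I 0 × ⋯ × I (d-1)`. -/
abbrev Tensor (d : ℕ) (I : Fin d → ℕ) : Type := (∀ j, Fin (I j)) → ℝ

namespace Tensor

variable {d : ℕ} {I J : Fin d → ℕ}

/-- Square of the Frobenius norm of a tensor. -/
def frobSq (X : Tensor d I) : ℝ := ∑ i, (X i) ^ 2

/-- Frobenius norm of a tensor. -/
def frobNorm (X : Tensor d I) : ℝ := Real.sqrt (frobSq X)

/-- Mode-`j` product of a tensor with a square matrix `A ∈ ℝ^{I_j × I_j}`. -/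
def modeMul (X : Tensor d I) (j : Fin d) (A : Matrix (Fin (I j)) (Fin (I j)) ℝ) :
    Tensor d I :=
  fun i => ∑ k, A (i j) k * X (Function.update i j k)

/-- `modeMulFirst X A t = X ×₁ A₁ ×₂ A₂ ⋯ ×ₜ Aₜ` (the first `t` modes, square matrices). -/
def modeMulFirst (X : Tensor d I) (A : ∀ j, Matrix (Fin (I j)) (Fin (I j)) ℝ) : ℕ → Tensor d I
  | 0 => X
  | t + 1 =>
    if h : t < d then modeMul (modeMulFirst X A t) ⟨t, h⟩ (A ⟨t, h⟩)
    else modeMulFirst X A t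

/-- Simultaneous mode product in every mode: `multiMul G A = G ×₁ A₁ ⋯ ×_d A_d`,
where `A j ∈ ℝ^{I_j × J_j}` and `G` has dimensions `J`. -/
def multiMul (G : Tensor d J) (A : ∀ j, Matrix (Fin (I j)) (Fin (J j)) ℝ) : Tensor d I :=
  fun i => ∑ k : ∀ j, Fin (J j), (∏ j, A j (i j) (k j)) * G k

/-- Mode-`j` unfolding of a tensor, as a matrix with rows indexed by `Fin (I j)` and
columns indexed by the remaining modes. -/
def unfold (X : Tensor d I) (j : Fin d) :
    Matrix (Fin (I j)) (∀ k : {k : Fin d // k ≠ j}, Fin (I k.1)) ℝ :=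
  Matrix.of fun a b => X fun k => if h : k = j then Fin.cast (congrArg I h.symm) a else b ⟨k, h⟩

end Tensor

/-- `singularValues A i` is the `(i+1)`-st largest singular value of `A`
(0-based indexing; `0` when `i` exceeds the number of rows). -/
def singularValues {m n : Type*} [Fintype m] [Fintype n] [DecidableEq m]
    (A : Matrix m n ℝ) : ℕ → ℝ := fun i =>
  if h : i < Fintype.card m then
    let ev : Fin (Fintype.card m) → ℝ :=
      (Matrix.isHermitian_mul_conjTranspose_self A).eigenvalues ∘ (Fintype.equivFin m).symm
    Real.sqrt ((ev ∘ Tuple.sort ev) ⟨Fintype.card m - 1 - i, by omega⟩)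
  else 0

/-- Spectral norm (largest singular value). -/
def specNorm {m n : Type*} [Fintype m] [Fintype n] [DecidableEq m]
    (A : Matrix m n ℝ) : ℝ := singularValues A 0

/-- Square of the Frobenius norm of a matrix. -/
def matFrobSq {m n : Type*} [Fintype m] [Fintype n] (M : Matrix m n ℝ) : ℝ :=
  ∑ i, ∑ j, (M i j) ^ 2

/-- Frobenius norm of a matrix. -/
def matFrobNorm {m n : Type*} [Fintype m] [Fintype n] (M : Matrix m n ℝ) : ℝ :=
  Real.sqrt (matFrobSq M)

/-- A rectangular "diagonal" matrix with entries `s 0, s 1, …` placed along the diagonal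
determined by the chosen enumerations of the index types. -/
def diagMat (m n : Type*) [Fintype m] [Fintype n] (s : ℕ → ℝ) : Matrix m n ℝ :=
  Matrix.of fun a b =>
    if (Fintype.equivFin m a : ℕ) = (Fintype.equivFin n b : ℕ) then s (Fintype.equivFin m a)
    else 0

/-- `IsSVD M U s V` : `M = U Σ Vᵀ` is a singular value decomposition of `M`, with `U, V`
orthogonal and the singular values `s` nonnegative and arranged in decreasing order. -/
def IsSVD {m n : Type*} [Fintype m] [Fintype n] [DecidableEq m] [DecidableEq n]
    (M : Matrix m n ℝ) (U : Matrix m m ℝ) (s : ℕ → ℝ) (V : Matrix n n ℝ) : Prop :=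
  Uᵀ * U = 1 ∧ Vᵀ * V = 1 ∧ Antitone s ∧ (∀ i, 0 ≤ s i) ∧
    (∀ i, min (Fintype.card m) (Fintype.card n) ≤ i → s i = 0) ∧
    M = U * diagMat m n s * Vᵀ

/-- `B` is the rank-`r` truncated SVD of `M`: it is obtained from an SVD of `M` by
retaining only the `r` largest singular values. -/
def IsSVDTruncation {m n : Type*} [Fintype m] [Fintype n] [DecidableEq m] [DecidableEq n]
    (M : Matrix m n ℝ) (r : ℕ) (B : Matrix m n ℝ) : Prop :=
  ∃ U s V, IsSVD M U s V ∧ B = U * diagMat m n (fun i => if i < r then s i else 0) * Vᵀ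

/-- `A` consists of the first `r` left singular vectors of `M` (the columns of the
orthogonal factor `U` of an SVD of `M` corresponding to the `r` largest singular values). -/
def IsTopLeftSingVecs {m n : Type*} [Fintype m] [Fintype n] [DecidableEq m] [DecidableEq n]
    (M : Matrix m n ℝ) (r : ℕ) (A : Matrix m (Fin r) ℝ) : Prop :=
  ∃ U s V, IsSVD M U s V ∧ ∃ h : r ≤ Fintype.card m,
    ∀ (a : m) (k : Fin r), A a k = U a ((Fintype.equivFin m).symm (Fin.castLE h k))

/-- Column space of a matrix. -/
def colSpace {m n : Type*} [Fintype n] (M : Matrix m n ℝ) : Submodule ℝ (m → ℝ) :=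
  LinearMap.range M.mulVecLin

/-- `Xopt` is a best multilinear rank-`r` approximation of `X` in the Frobenius norm. -/
def IsBestRankApprox {d : ℕ} {I : Fin d → ℕ} (X : Tensor d I) (r : Fin d → ℕ)
    (Xopt : Tensor d I) : Prop :=
  (∀ j, (Tensor.unfold Xopt j).rank ≤ r j) ∧
    ∀ Y : Tensor d I, (∀ j, (Tensor.unfold Y j).rank ≤ r j) →
      Tensor.frobNorm (X - Xopt) ≤ Tensor.frobNorm (X - Y)

/-- `P` is a selection operator: its columns are distinct columns of the identity matrix. -/
def IsSelection {a b : Type*} [DecidableEq a] (P : Matrix a b ℝ) : Prop :=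
  ∃ f : b → a, Function.Injective f ∧ ∀ i k, P i k = if i = f k then 1 else 0

section STHOSVD

variable {d : ℕ}

/-- Dimensions of the partially truncated core tensor in the STHOSVD with processing
order `[0, 1, …, d-1]`: after processing the first `t` modes, mode `k` has dimension
`r k` for `k < t` and `I k` otherwise. -/
def stDims (I r : Fin d → ℕ) (t : ℕ) : Fin d → ℕ := fun k => if (k : ℕ) < t then r k else I k

theorem stDims_lt {I r : Fin d → ℕ} {t : ℕ} {k : Fin d} (h : (k : ℕ) < t) :
    stDims I r t k = r k := if_pos h

theorem stDims_ge {I r : Fin d → ℕ} {t : ℕ} {k : Fin d} (h : ¬ (k : ℕ) < t) :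
    stDims I r t k = I k := if_neg h

theorem stDims_self {I r : Fin d → ℕ} (j : Fin d) : stDims I r (j : ℕ) j = I j :=
  stDims_ge (lt_irrefl _)

/-- The partially truncated core tensor `G^{(t)} = X ×₁ A₁ᵀ ⋯ ×ₜ Aₜᵀ` of the STHOSVD
(processing order `[0, …, d-1]`). -/
def stCore {I r : Fin d → ℕ} (X : Tensor d I)
    (A : ∀ j, Matrix (Fin (I j)) (Fin (r j)) ℝ) (t : ℕ) : Tensor d (stDims I r t) :=
  Tensor.multiMul X fun k =>
    if h : (k : ℕ) < t then
      Matrix.reindex (finCongr (stDims_lt h).symm) (Equiv.refl _) (A k)ᵀ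
    else Matrix.reindex (finCongr (stDims_ge h).symm) (Equiv.refl _)
      (1 : Matrix (Fin (I k)) (Fin (I k)) ℝ)

/-- The `t`-th partial approximation `X̂^{(t)} = G^{(t)} ×₁ A₁ ⋯ ×ₜ Aₜ` of the STHOSVD. -/
def stPartial {I r : Fin d → ℕ} (X : Tensor d I)
    (A : ∀ j, Matrix (Fin (I j)) (Fin (r j)) ℝ) (t : ℕ) : Tensor d I :=
  Tensor.multiMul (stCore X A t) fun k =>
    if h : (k : ℕ) < t then
      Matrix.reindex (Equiv.refl _) (finCongr (stDims_lt h).symm) (A k)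
    else Matrix.reindex (Equiv.refl _) (finCongr (stDims_ge h).symm)
      (1 : Matrix (Fin (I k)) (Fin (I k)) ℝ)

/-- Column index type for the mode-`j` unfolding of a tensor with dimensions `I`. -/
abbrev colIdx (I : Fin d → ℕ) (j : Fin d) : Type := ∀ k : {k : Fin d // k ≠ j}, Fin (I k.1)

end STHOSVD

/-- Measurable space structure on matrices (entrywise). -/
instance matrixMeasurableSpace (m n : Type*) : MeasurableSpace (Matrix m n ℝ) :=
  inferInstanceAs (MeasurableSpace (m → n → ℝ))

/-- The distribution of a standard Gaussian random matrix: independent `N(0,1)` entries. -/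
def gaussMat (m n : Type*) [Fintype m] [Fintype n] : Measure (Matrix m n ℝ) :=
  (Measure.pi fun _ : m => Measure.pi fun _ : n => gaussianReal 0 1 :
    Measure (m → n → ℝ))

end

noncomputable section

/-- The structure-preserving STHOSVD approximation `X̂ = G^{(d)} ×₁ A₁ ⋯ ×_d A_d`, where
the core `G^{(d)} = X ×₁ P₁ᵀ ⋯ ×_d P_dᵀ` is built from the selection operators `P j` and
the (not necessarily orthonormal) factor matrices are `A j`. -/
def spApprox {d : ℕ} {I L : Fin d → ℕ} (X : Tensor d I)
    (P : ∀ j, Matrix (Fin (I j)) (Fin (L j)) ℝ)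
    (A : ∀ j, Matrix (Fin (I j)) (Fin (L j)) ℝ) : Tensor d I :=
  Tensor.multiMul (stCore X P d) fun k =>
    Matrix.reindex (Equiv.refl _) (finCongr (stDims_lt k.isLt).symm) (A k)

end

noncomputable section AuxHOSVD

namespace Tensor

open Finset

variable {d : ℕ} {I J K : Fin d → ℕ}

/-- Inner product of tensors. -/
def tinner (Y Z : Tensor d I) : ℝ := ∑ i, Y i * Z i

lemma frobSq_eq_tinner (Y : Tensor d I) : frobSq Y = tinner Y Y := by
  simp [frobSq, tinner, sq]

lemma frobSq_nonneg (Y : Tensor d I) : 0 ≤ frobSq Y :=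
  Finset.sum_nonneg fun i _ => sq_nonneg _

lemma frobNorm_nonneg (Y : Tensor d I) : 0 ≤ frobNorm Y := Real.sqrt_nonneg _

lemma frobNorm_sq (Y : Tensor d I) : (frobNorm Y) ^ 2 = frobSq Y :=
  Real.sq_sqrt (frobSq_nonneg Y)

lemma tinner_comm (Y Z : Tensor d I) : tinner Y Z = tinner Z Y := by
  simp [tinner, mul_comm]

lemma tinner_zero_right (Y : Tensor d I) : tinner Y (0 : Tensor d I) = 0 := by
  simp [tinner]

lemma tinner_add_right (Y U V : Tensor d I) :
    tinner Y (U + V) = tinner Y U + tinner Y V := by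
  simp [tinner, mul_add, Finset.sum_add_distrib]

lemma sum_pi_prod (f : ∀ j, Fin (K j) → ℝ) :
    ∑ c : ∀ j, Fin (K j), ∏ j, f j (c j) = ∏ j, ∑ x, f j x := by
  rw [Finset.prod_univ_sum, Fintype.piFinset_univ]

lemma multiMul_one (X : Tensor d I) :
    multiMul X (fun j => (1 : Matrix (Fin (I j)) (Fin (I j)) ℝ)) = X := by
  funext i
  have h : ∀ kk : ∀ j, Fin (I j),
      (∏ j, (1 : Matrix (Fin (I j)) (Fin (I j)) ℝ) (i j) (kk j)) =
        if i = kk then 1 else 0 := by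
    intro kk
    by_cases h : i = kk
    · subst h; simp [Matrix.one_apply]
    · rw [if_neg h]
      have : ∃ j', i j' ≠ kk j' := by
        by_contra hc; push_neg at hc; exact h (funext hc)
      obtain ⟨j', hj'⟩ := this
      exact Finset.prod_eq_zero (Finset.mem_univ j') (by simp [Matrix.one_apply, hj'])
  simp only [multiMul, h, ite_mul, one_mul, zero_mul, Finset.sum_ite_eq, Finset.mem_univ,
    if_true]

lemma multiMul_multiMul (X : Tensor d J)
    (M : ∀ j, Matrix (Fin (K j)) (Fin (J j)) ℝ)
    (N : ∀ j, Matrix (Fin (I j)) (Fin (K j)) ℝ) :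
    multiMul (multiMul X M) N = multiMul X (fun j => N j * M j) := by
  funext i
  simp only [multiMul, Matrix.mul_apply, Finset.mul_sum]
  rw [Finset.sum_comm]
  refine Finset.sum_congr rfl fun l _ => ?_
  simp only [← mul_assoc]
  rw [← Finset.sum_mul]
  congr 1
  rw [← sum_pi_prod (fun j x => N j (i j) x * M j x (l j))]
  refine Finset.sum_congr rfl fun c _ => ?_
  rw [Finset.prod_mul_distrib]

lemma tinner_multiMul (X : Tensor d J) (M : ∀ j, Matrix (Fin (I j)) (Fin (J j)) ℝ)
    (Z : Tensor d I) :
    tinner (multiMul X M) Z = tinner X (multiMul Z (fun j => (M j)ᵀ)) := by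
  simp only [tinner, multiMul, Matrix.transpose_apply, Finset.sum_mul, Finset.mul_sum]
  rw [Finset.sum_comm]
  refine Finset.sum_congr rfl fun kk _ => Finset.sum_congr rfl fun i _ => by ring

lemma multiMul_eq_zero (X : Tensor d J) (M : ∀ j, Matrix (Fin (I j)) (Fin (J j)) ℝ)
    (j0 : Fin d) (h : M j0 = 0) : multiMul X M = 0 := by
  funext i
  simp only [multiMul, Pi.zero_apply]
  refine Finset.sum_eq_zero fun kk _ => ?_
  rw [Finset.prod_eq_zero (Finset.mem_univ j0) (by rw [h]; rfl), zero_mul]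

lemma multiMul_sub (U V : Tensor d J) (M : ∀ j, Matrix (Fin (I j)) (Fin (J j)) ℝ) :
    multiMul (U - V) M = multiMul U M - multiMul V M := by
  funext i
  simp [multiMul, Pi.sub_apply, mul_sub, Finset.sum_sub_distrib]

/-- The family of matrices that is `B` in mode `j` and the identity elsewhere. -/
def modeFam (j : Fin d) (B : Matrix (Fin (I j)) (Fin (I j)) ℝ) :
    ∀ j', Matrix (Fin (I j')) (Fin (I j')) ℝ :=
  Function.update (fun j' => (1 : Matrix (Fin (I j')) (Fin (I j')) ℝ)) j B

lemma modeMul_eq_multiMul (X : Tensor d I) (j : Fin d)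
    (B : Matrix (Fin (I j)) (Fin (I j)) ℝ) :
    modeMul X j B = multiMul X (modeFam j B) := by
  funext i
  have hprod : ∀ kk : ∀ j', Fin (I j'),
      (∏ j', modeFam j B j' (i j') (kk j')) =
        if Function.update i j (kk j) = kk then B (i j) (kk j) else 0 := by
    intro kk
    by_cases h : Function.update i j (kk j) = kk
    · rw [if_pos h, ← Finset.mul_prod_erase Finset.univ _ (Finset.mem_univ j)]
      have h1 : modeFam j B j (i j) (kk j) = B (i j) (kk j) := by simp [modeFam]
      have h2 : (∏ j' ∈ Finset.univ.erase j, modeFam j B j' (i j') (kk j')) = 1 := by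
        refine Finset.prod_eq_one fun j' hj' => ?_
        have hne : j' ≠ j := (Finset.mem_erase.mp hj').1
        have hik : i j' = kk j' := by
          have := congrFun h j'; rwa [Function.update_of_ne hne] at this
        simp [modeFam, Function.update_of_ne hne, Matrix.one_apply, hik]
      rw [h1, h2, mul_one]
    · rw [if_neg h]
      have : ∃ j', j' ≠ j ∧ i j' ≠ kk j' := by
        by_contra hc
        push_neg at hc
        apply h
        funext j'
        by_cases hj : j' = j
        · subst hj; simp
        · rw [Function.update_of_ne hj]; exact hc j' hj
      obtain ⟨j', hne, hij⟩ := this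
      refine Finset.prod_eq_zero (Finset.mem_univ j') ?_
      simp [modeFam, Function.update_of_ne hne, Matrix.one_apply, hij]
  symm
  calc (multiMul X (modeFam j B)) i
      = ∑ kk, if Function.update i j (kk j) = kk then B (i j) (kk j) * X kk else 0 := by
        refine Finset.sum_congr rfl fun kk _ => ?_
        rw [hprod, ite_mul, zero_mul]
    _ = ∑ kk, ∑ c, if Function.update i j c = kk then B (i j) c * X kk else 0 := by
        refine Finset.sum_congr rfl fun kk _ => ?_
        by_cases h : Function.update i j (kk j) = kk
        · rw [if_pos h, eq_comm]
          rw [Finset.sum_eq_single (kk j)]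
          · rw [if_pos h]
          · intro c _ hc
            refine if_neg fun hcon => hc ?_
            have := congrFun hcon j
            simpa using this
          · simp
        · rw [if_neg h, eq_comm]
          refine Finset.sum_eq_zero fun c _ => if_neg fun hcon => h ?_
          have hcj : c = kk j := by
            have := congrFun hcon j; simpa using this
          rwa [hcj] at hcon
    _ = ∑ c, ∑ kk, if Function.update i j c = kk then B (i j) c * X kk else 0 :=
        Finset.sum_comm
    _ = ∑ c, B (i j) c * X (Function.update i j c) := by
        refine Finset.sum_congr rfl fun c _ => ?_
        simp [Finset.sum_ite_eq]

lemma modeMul_one (X : Tensor d I) (j : Fin d) :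
    modeMul X j (1 : Matrix (Fin (I j)) (Fin (I j)) ℝ) = X := by
  funext i
  simp [modeMul, Matrix.one_apply, ite_mul, Finset.sum_ite_eq]

lemma modeMul_sub_mat (X : Tensor d I) (j : Fin d)
    (B C : Matrix (Fin (I j)) (Fin (I j)) ℝ) :
    modeMul X j (B - C) = modeMul X j B - modeMul X j C := by
  funext i
  simp [modeMul, sub_mul, Finset.sum_sub_distrib]

lemma modeMul_add_mat (X : Tensor d I) (j : Fin d)
    (B C : Matrix (Fin (I j)) (Fin (I j)) ℝ) :
    modeMul X j (B + C) = modeMul X j B + modeMul X j C := by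
  funext i
  simp [modeMul, add_mul, Finset.sum_add_distrib]

lemma modeMul_sub_tensor (U V : Tensor d I) (j : Fin d)
    (B : Matrix (Fin (I j)) (Fin (I j)) ℝ) :
    modeMul (U - V) j B = modeMul U j B - modeMul V j B := by
  funext i
  simp [modeMul, Pi.sub_apply, mul_sub, Finset.sum_sub_distrib]

lemma modeMul_modeMul (X : Tensor d I) (j : Fin d)
    (B C : Matrix (Fin (I j)) (Fin (I j)) ℝ) :
    modeMul (modeMul X j B) j C = modeMul X j (C * B) := by
  funext i
  simp only [modeMul, Function.update_self, Function.update_idem, Matrix.mul_apply,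
    Finset.mul_sum, Finset.sum_mul]
  rw [Finset.sum_comm]
  refine Finset.sum_congr rfl fun l _ => Finset.sum_congr rfl fun c _ => by ring

lemma tinner_modeMul (X Z : Tensor d I) (j : Fin d)
    (B : Matrix (Fin (I j)) (Fin (I j)) ℝ) :
    tinner (modeMul X j B) Z = tinner X (modeMul Z j Bᵀ) := by
  rw [modeMul_eq_multiMul, modeMul_eq_multiMul, tinner_multiMul]
  have hfam : (fun j' => (modeFam j B j')ᵀ) = modeFam j Bᵀ := by
    funext j'
    by_cases h : j' = j
    · subst h; simp [modeFam]
    · simp [modeFam, Function.update_of_ne h]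
  rw [hfam]

lemma frobSq_modeMul_le (Z : Tensor d I) (j : Fin d)
    (P : Matrix (Fin (I j)) (Fin (I j)) ℝ) (hPt : Pᵀ = P) (hPP : P * P = P) :
    frobSq (modeMul Z j P) ≤ frobSq Z := by
  have key : ∀ Q : Matrix (Fin (I j)) (Fin (I j)) ℝ, Qᵀ = Q → Q * Q = Q →
      tinner Z (modeMul Z j Q) = frobSq (modeMul Z j Q) := by
    intro Q hQt hQQ
    rw [frobSq_eq_tinner, tinner_modeMul, modeMul_modeMul, hQt, hQQ]
  have h1 := key P hPt hPP
  have h2 : tinner Z (modeMul Z j (1 - P)) = frobSq (modeMul Z j (1 - P)) := by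
    refine key _ (by rw [Matrix.transpose_sub, Matrix.transpose_one, hPt]) ?_
    have : (1 - P) * (1 - P) = 1 - P - P + P * P := by noncomm_ring
    rw [this, hPP]; abel
  have hsplit : frobSq Z = frobSq (modeMul Z j P) + frobSq (modeMul Z j (1 - P)) := by
    have hZ : Z = modeMul Z j P + modeMul Z j (1 - P) := by
      rw [← modeMul_add_mat]
      have : P + (1 - P) = (1 : Matrix (Fin (I j)) (Fin (I j)) ℝ) := by abel
      rw [this, modeMul_one]
    calc frobSq Z = tinner Z Z := frobSq_eq_tinner Z
      _ = tinner Z (modeMul Z j P + modeMul Z j (1 - P)) := by rw [← hZ]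
      _ = _ := by rw [tinner_add_right, h1, h2]
  have := frobSq_nonneg (modeMul Z j (1 - P))
  linarith

/-- The family that is `M j` for `j < t` and the identity for `j ≥ t`. -/
def famUpTo (M : ∀ j, Matrix (Fin (I j)) (Fin (I j)) ℝ) (t : ℕ) :
    ∀ j, Matrix (Fin (I j)) (Fin (I j)) ℝ :=
  fun j => if (j : ℕ) < t then M j else 1

lemma famUpTo_zero (M : ∀ j, Matrix (Fin (I j)) (Fin (I j)) ℝ) :
    famUpTo M 0 = fun j => 1 := by
  funext j; simp [famUpTo]

lemma famUpTo_d (M : ∀ j, Matrix (Fin (I j)) (Fin (I j)) ℝ) :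
    famUpTo M d = M := by
  funext j; simp [famUpTo, j.isLt]

lemma famUpTo_succ_of_lt (M : ∀ j, Matrix (Fin (I j)) (Fin (I j)) ℝ) {t : ℕ}
    (ht : t < d) :
    famUpTo M (t + 1) = Function.update (famUpTo M t) ⟨t, ht⟩ (M ⟨t, ht⟩) := by
  funext j
  by_cases h : j = ⟨t, ht⟩
  · subst h; simp [famUpTo]
  · rw [Function.update_of_ne h]
    have hne : (j : ℕ) ≠ t := fun hc => h (Fin.ext hc)
    simp only [famUpTo]
    exact if_congr (by omega) rfl rfl

lemma famUpTo_succ_of_ge (M : ∀ j, Matrix (Fin (I j)) (Fin (I j)) ℝ) {t : ℕ}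
    (ht : ¬ t < d) : famUpTo M (t + 1) = famUpTo M t := by
  funext j
  have := j.isLt
  simp only [famUpTo]
  exact if_congr (by omega) rfl rfl

lemma multiMul_famUpTo_succ (W : Tensor d I)
    (M : ∀ j, Matrix (Fin (I j)) (Fin (I j)) ℝ) {t : ℕ} (ht : t < d) :
    multiMul W (famUpTo M (t + 1)) =
      modeMul (multiMul W (famUpTo M t)) ⟨t, ht⟩ (M ⟨t, ht⟩) := by
  rw [modeMul_eq_multiMul, multiMul_multiMul, famUpTo_succ_of_lt M ht]
  have hfam : (fun j => modeFam (⟨t, ht⟩ : Fin d) (M ⟨t, ht⟩) j * famUpTo M t j) =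
      Function.update (famUpTo M t) ⟨t, ht⟩ (M ⟨t, ht⟩) := by
    funext j
    by_cases h : j = ⟨t, ht⟩
    · subst h
      rw [Function.update_self]
      have h1 : famUpTo M t (⟨t, ht⟩ : Fin d) = 1 := by simp [famUpTo]
      simp [modeFam, h1]
    · rw [Function.update_of_ne h]
      simp [modeFam, Function.update_of_ne h]
  rw [hfam]

lemma frobSq_multiMul_famUpTo_le (Z : Tensor d I)
    (M : ∀ j, Matrix (Fin (I j)) (Fin (I j)) ℝ)
    (hM : ∀ j, (M j)ᵀ = M j ∧ M j * M j = M j) (t : ℕ) :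
    frobSq (multiMul Z (famUpTo M t)) ≤ frobSq Z := by
  induction t with
  | zero => rw [famUpTo_zero, multiMul_one]
  | succ t ih =>
    by_cases ht : t < d
    · rw [multiMul_famUpTo_succ Z M ht]
      exact le_trans (frobSq_modeMul_le _ _ _ (hM _).1 (hM _).2) ih
    · rw [famUpTo_succ_of_ge M ht]; exact ih

end Tensor

end AuxHOSVD

/-- error apportionment for adaptive algorithms: if
`Σ_j ε_j² = ε²` and each factor matrix `A j` has orthonormal columns with
`‖X ×_j (I − A_j A_jᵀ)‖_F ≤ ε_j ‖X‖_F`, then the Tucker approximation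
`X̂ = (X ×₁ A₁ᵀ ⋯ ×_d A_dᵀ) ×₁ A₁ ⋯ ×_d A_d` satisfies `‖X − X̂‖_F ≤ ε ‖X‖_F`.
In particular this holds when each mode satisfies the bound with `ε_j = ε/√d`. -/
theorem adaptive_tolerance_apportionment
    (d : ℕ) (I k : Fin d → ℕ) (X : Tensor d I) (ε : ℝ) (hε : 0 < ε)
    (εs : Fin d → ℝ) (hεs : ∀ j, 0 ≤ εs j) (hsum : (∑ j, (εs j) ^ 2) = ε ^ 2)
    (A : ∀ j, Matrix (Fin (I j)) (Fin (k j)) ℝ)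
    (hortho : ∀ j, (A j)ᵀ * A j = 1)
    (hbound : ∀ j,
      Tensor.frobNorm (Tensor.modeMul X j (1 - A j * (A j)ᵀ)) ≤ εs j * Tensor.frobNorm X) :
    Tensor.frobNorm (X - Tensor.multiMul (Tensor.multiMul X fun j => (A j)ᵀ) A) ≤
      ε * Tensor.frobNorm X ∧
    ((∀ j, Tensor.frobNorm (Tensor.modeMul X j (1 - A j * (A j)ᵀ)) ≤
        ε / Real.sqrt d * Tensor.frobNorm X) →
      Tensor.frobNorm (X - Tensor.multiMul (Tensor.multiMul X fun j => (A j)ᵀ) A) ≤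
        ε * Tensor.frobNorm X) := by
  classical
  open Tensor in
  set P : ∀ j, Matrix (Fin (I j)) (Fin (I j)) ℝ := fun j => A j * (A j)ᵀ with hPdef
  have hPt : ∀ j, (P j)ᵀ = P j := by
    intro j
    simp [hPdef, Matrix.transpose_mul, Matrix.transpose_transpose]
  have hPP : ∀ j, P j * P j = P j := by
    intro j
    simp only [hPdef]
    rw [Matrix.mul_assoc, ← Matrix.mul_assoc (A j)ᵀ (A j) (A j)ᵀ, hortho j, Matrix.one_mul]
  have hXhat : Tensor.multiMul (Tensor.multiMul X fun j => (A j)ᵀ) A =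
      Tensor.multiMul X P := Tensor.multiMul_multiMul X _ A
  -- the partial approximations
  set Y : ℕ → Tensor d I := fun t => Tensor.multiMul X (Tensor.famUpTo P t) with hYdef
  set D : ℕ → Tensor d I := fun t => Y t - Y (t + 1) with hDdef
  have hY0 : Y 0 = X := by
    rw [hYdef]; simp only [Tensor.famUpTo_zero, Tensor.multiMul_one]
  have hYd : Y d = Tensor.multiMul X P := by
    rw [hYdef]; simp only [Tensor.famUpTo_d]
  have htel : X - Tensor.multiMul X P = ∑ t ∈ Finset.range d, D t := by
    rw [hDdef]
    simp only []
    rw [Finset.sum_range_sub' Y d, hY0, hYd]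
  -- D t as a single-mode deflation
  have hD : ∀ t (ht : t < d),
      D t = Tensor.modeMul (Y t) ⟨t, ht⟩ (1 - P ⟨t, ht⟩) := by
    intro t ht
    rw [hDdef]
    simp only []
    rw [show Y (t + 1) = Tensor.modeMul (Y t) ⟨t, ht⟩ (P ⟨t, ht⟩) from
      Tensor.multiMul_famUpTo_succ X P ht]
    rw [Tensor.modeMul_sub_mat, Tensor.modeMul_one]
  -- D t as projections applied to a deflated tensor
  have hDZ : ∀ t (ht : t < d),
      D t = Tensor.multiMul (Tensor.modeMul X ⟨t, ht⟩ (1 - P ⟨t, ht⟩))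
        (Tensor.famUpTo P t) := by
    intro t ht
    rw [hD t ht, hYdef]
    simp only []
    rw [Tensor.modeMul_eq_multiMul, Tensor.modeMul_eq_multiMul,
      Tensor.multiMul_multiMul, Tensor.multiMul_multiMul]
    have hfam : (fun j => Tensor.modeFam (⟨t, ht⟩ : Fin d) (1 - P ⟨t, ht⟩) j *
          Tensor.famUpTo P t j) =
        (fun j => Tensor.famUpTo P t j *
          Tensor.modeFam (⟨t, ht⟩ : Fin d) (1 - P ⟨t, ht⟩) j) := by
      funext j
      by_cases h : j = (⟨t, ht⟩ : Fin d)
      · subst h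
        have h1 : Tensor.famUpTo P t (⟨t, ht⟩ : Fin d) = 1 := by simp [Tensor.famUpTo]
        simp [Tensor.modeFam, h1]
      · simp [Tensor.modeFam, Function.update_of_ne h]
    rw [hfam]
  -- orthogonality of the terms
  have horthlt : ∀ t t', t < t' → t' < d → Tensor.tinner (D t) (D t') = 0 := by
    intro t t' htt' ht'
    have ht : t < d := lt_trans htt' ht'
    have hzero : ∀ s, t < s → s ≤ d →
        Tensor.modeMul (Y s) ⟨t, ht⟩ (1 - P ⟨t, ht⟩) = 0 := by
      intro s hts _
      rw [hYdef]
      simp only []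
      rw [Tensor.modeMul_eq_multiMul, Tensor.multiMul_multiMul]
      refine Tensor.multiMul_eq_zero X _ ⟨t, ht⟩ ?_
      have h1 : Tensor.famUpTo P s (⟨t, ht⟩ : Fin d) = P ⟨t, ht⟩ := by
        simp [Tensor.famUpTo, hts]
      have h2 : Tensor.modeFam (⟨t, ht⟩ : Fin d) (1 - P ⟨t, ht⟩) ⟨t, ht⟩ =
          1 - P ⟨t, ht⟩ := by simp [Tensor.modeFam]
      rw [h1, h2, Matrix.sub_mul, Matrix.one_mul, hPP, sub_self]
    rw [hD t ht, Tensor.tinner_modeMul]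
    have hT : (1 - P (⟨t, ht⟩ : Fin d))ᵀ = 1 - P ⟨t, ht⟩ := by
      rw [Matrix.transpose_sub, Matrix.transpose_one, hPt]
    rw [hT]
    have : Tensor.modeMul (D t') ⟨t, ht⟩ (1 - P ⟨t, ht⟩) = 0 := by
      rw [hDdef]
      simp only []
      rw [Tensor.modeMul_sub_tensor, hzero t' htt' (le_of_lt ht'),
        hzero (t' + 1) (Nat.lt_succ_of_lt htt') ht', sub_self]
    rw [this, Tensor.tinner_zero_right]
  have horth : ∀ t t', t < d → t' < d → t ≠ t' → Tensor.tinner (D t) (D t') = 0 := by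
    intro t t' ht ht' hne
    rcases lt_or_gt_of_ne hne with h | h
    · exact horthlt t t' h ht'
    · rw [Tensor.tinner_comm]; exact horthlt t' t h ht
  -- the squared error splits
  have hsplit : Tensor.frobSq (X - Tensor.multiMul X P) =
      ∑ t ∈ Finset.range d, Tensor.frobSq (D t) := by
    rw [htel, Tensor.frobSq_eq_tinner]
    have expand : Tensor.tinner (∑ t ∈ Finset.range d, D t) (∑ t ∈ Finset.range d, D t) =
        ∑ t ∈ Finset.range d, ∑ t' ∈ Finset.range d, Tensor.tinner (D t) (D t') := by
      simp only [Tensor.tinner, Finset.sum_apply, Finset.sum_mul_sum]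
      rw [Finset.sum_comm]
      exact Finset.sum_congr rfl fun t _ => Finset.sum_comm
    rw [expand]
    refine Finset.sum_congr rfl fun t htmem => ?_
    rw [Finset.sum_eq_single_of_mem t htmem]
    · exact (Tensor.frobSq_eq_tinner (D t)).symm
    · intro t' ht'mem hne
      exact horth t t' (Finset.mem_range.mp htmem) (Finset.mem_range.mp ht'mem) hne.symm
  -- per-mode bound
  have hfrobX : (Tensor.frobNorm X) ^ 2 = Tensor.frobSq X := Tensor.frobNorm_sq X
  have hterm : ∀ t ∈ Finset.range d,
      Tensor.frobSq (D t) ≤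
        (if h : t < d then (εs ⟨t, h⟩) ^ 2 * Tensor.frobSq X else 0) := by
    intro t htmem
    have ht : t < d := Finset.mem_range.mp htmem
    rw [dif_pos ht]
    have hsymm : ∀ j, (P j)ᵀ = P j ∧ P j * P j = P j := fun j => ⟨hPt j, hPP j⟩
    have step1 : Tensor.frobSq (D t) ≤
        Tensor.frobSq (Tensor.modeMul X ⟨t, ht⟩ (1 - P ⟨t, ht⟩)) := by
      rw [hDZ t ht]
      exact Tensor.frobSq_multiMul_famUpTo_le _ P hsymm t
    have step2 : Tensor.frobSq (Tensor.modeMul X ⟨t, ht⟩ (1 - P ⟨t, ht⟩)) ≤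
        (εs ⟨t, ht⟩) ^ 2 * Tensor.frobSq X := by
      have hb := hbound ⟨t, ht⟩
      have hnn := Tensor.frobNorm_nonneg (Tensor.modeMul X ⟨t, ht⟩ (1 - P ⟨t, ht⟩))
      have := pow_le_pow_left₀ hnn hb 2
      rw [Tensor.frobNorm_sq, mul_pow, hfrobX] at this
      exact this
    exact le_trans step1 step2
  have hsum2 : ∑ t ∈ Finset.range d,
      (if h : t < d then (εs ⟨t, h⟩) ^ 2 * Tensor.frobSq X else 0) =
      ε ^ 2 * Tensor.frobSq X := by
    rw [← Fin.sum_univ_eq_sum_range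
      (fun t => if h : t < d then (εs ⟨t, h⟩) ^ 2 * Tensor.frobSq X else 0) d]
    have : ∀ j : Fin d,
        (if h : (j : ℕ) < d then (εs ⟨(j : ℕ), h⟩) ^ 2 * Tensor.frobSq X else 0) =
          (εs j) ^ 2 * Tensor.frobSq X := by
      intro j
      rw [dif_pos j.isLt]
    rw [Finset.sum_congr rfl fun j _ => this j, ← Finset.sum_mul, hsum]
  have hmain : Tensor.frobSq (X - Tensor.multiMul X P) ≤ ε ^ 2 * Tensor.frobSq X := by
    rw [hsplit, ← hsum2]
    exact Finset.sum_le_sum hterm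
  have hfinal : Tensor.frobNorm (X - Tensor.multiMul (Tensor.multiMul X fun j => (A j)ᵀ) A) ≤
      ε * Tensor.frobNorm X := by
    rw [hXhat]
    have h1 : Tensor.frobNorm (X - Tensor.multiMul X P) =
        Real.sqrt (Tensor.frobSq (X - Tensor.multiMul X P)) := rfl
    have h2 : Tensor.frobNorm X = Real.sqrt (Tensor.frobSq X) := rfl
    rw [h1, h2]
    calc Real.sqrt (Tensor.frobSq (X - Tensor.multiMul X P))
        ≤ Real.sqrt (ε ^ 2 * Tensor.frobSq X) := Real.sqrt_le_sqrt hmain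
      _ = ε * Real.sqrt (Tensor.frobSq X) := by
          rw [Real.sqrt_mul (sq_nonneg ε), Real.sqrt_sq hε.le]
  exact ⟨hfinal, fun _ => hfinal⟩
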